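/- arXiv:2203.12149 — 2 statements merged into one kernel-verified Lean document; each statement's English description precedes it below -/
import Mathlib

section
/- For every odd positive integer n, and every monic polynomial f_1(x) over Z/2Z dividing x^n − 1, there exists a unique monic polynomial f(x) over Z/4Z dividing x^n − 1 in Z4[x] whose reduction modulo 2 equals f_1(x). -/
/-!
Reduction `ℤ/4 → ℤ/2` is surjective with square-zero kernel `(2)`, and `X ^ n - 1` is separable
over `ℤ/2` for odd `n`, so a monic divisor `f₁` is coprime to its cofactor `g₁`. Lift them to
`F` (monic) and `G`; then `E = h - F * G` lies in the kernel and a Bézout relation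
`A * F + B * G ≡ 1` gives `E = F * (A * E) + G * (B * E)`, since products of two kernel elements
vanish. Dividing `B * E` by `F`, the correction `F + (B * E %ₘ F)` is still monic, still lifts `f₁`,
and divides `h`. For uniqueness the same relation shows that such a lift divides any other monic
lift dividing `h`, and monic polynomials of equal degree that divide each other agree.
-/

open Polynomial

/-- Reduction mod 2 on coefficients, `ℤ/4 → ℤ/2`. -/
noncomputable def red2 : ZMod 4 →+* ZMod 2 := ZMod.castHom (show (2:ℕ) ∣ 4 by norm_num) (ZMod 2)

namespace Polynomial

variable {R S : Type*} [CommRing R] [CommRing S] {φ : R →+* S}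

theorem mul_eq_zero_of_map_eq_zero (hφ : RingHom.ker φ ^ 2 = ⊥) {p q : R[X]}
    (hp : p.map φ = 0) (hq : q.map φ = 0) : p * q = 0 := by
  have hK : RingHom.ker (mapRingHom φ) ^ 2 = ⊥ := by
    rw [ker_mapRingHom, ← Ideal.map_pow, hφ, Ideal.map_bot]
  rw [← Ideal.mem_bot, ← hK, sq]
  exact Ideal.mul_mem_mul hp hq

theorem mul_eq_self_of_map_eq_one (hφ : RingHom.ker φ ^ 2 = ⊥) {p u : R[X]}
    (hp : p.map φ = 0) (hu : u.map φ = 1) : p * u = p := by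
  have : p * (u - 1) = 0 :=
    mul_eq_zero_of_map_eq_zero hφ hp (by rw [Polynomial.map_sub, hu, Polynomial.map_one, sub_self])
  linear_combination this

theorem exists_map_mul_add_mul_eq_one (hsurj : Function.Surjective φ) {F G : R[X]}
    (hcop : IsCoprime (F.map φ) (G.map φ)) : ∃ A B : R[X], (A * F + B * G).map φ = 1 := by
  obtain ⟨a, b, hab⟩ := hcop
  obtain ⟨A, rfl⟩ := map_surjective φ hsurj a
  obtain ⟨B, rfl⟩ := map_surjective φ hsurj b
  exact ⟨A, B, by rwa [Polynomial.map_add, Polynomial.map_mul, Polynomial.map_mul]⟩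

theorem exists_monic_dvd_map_eq_of_isCoprime [Nontrivial S] (hsurj : Function.Surjective φ)
    (hφ : RingHom.ker φ ^ 2 = ⊥) {h : R[X]} {f₁ g₁ : S[X]} (hf₁ : f₁.Monic)
    (hcop : IsCoprime f₁ g₁) (hfac : h.map φ = f₁ * g₁) :
    ∃ f : R[X], f.Monic ∧ f ∣ h ∧ f.map φ = f₁ := by
  have := φ.domain_nontrivial
  obtain ⟨F, hFmap, -, hF⟩ :=
    lifts_and_degree_eq_and_monic ((mem_lifts f₁).2 (map_surjective φ hsurj f₁)) hf₁
  obtain ⟨G, rfl⟩ := map_surjective φ hsurj g₁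
  obtain ⟨A, B, hAB⟩ := exists_map_mul_add_mul_eq_one hsurj (hFmap ▸ hcop)
  obtain ⟨E, hEdef⟩ : ∃ E, E = h - F * G := ⟨_, rfl⟩
  have hE : E.map φ = 0 := by
    rw [hEdef, Polynomial.map_sub, Polynomial.map_mul, hfac, hFmap, sub_self]
  have hr : (B * E %ₘ F).map φ = 0 := by
    rw [map_modByMonic φ hF, Polynomial.map_mul, hE, mul_zero, zero_modByMonic]
  have hε : (A * E + (B * E /ₘ F) * G).map φ = 0 := by
    rw [Polynomial.map_add, Polynomial.map_mul, Polynomial.map_mul, map_divByMonic φ hF,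
      Polynomial.map_mul, hE, mul_zero, mul_zero, zero_divByMonic, zero_mul, add_zero]
  refine ⟨F + B * E %ₘ F, hF.add_of_left (degree_modByMonic_lt _ hF),
    ⟨G + (A * E + (B * E /ₘ F) * G), ?_⟩, by rw [Polynomial.map_add, hFmap, hr, add_zero]⟩
  have hBez := mul_eq_self_of_map_eq_one hφ hE hAB
  have hdiv := modByMonic_add_div (B * E) F
  have hrε := mul_eq_zero_of_map_eq_zero hφ hr hε
  linear_combination -hEdef - hBez - G * hdiv - hrε

theorem eq_of_monic_of_dvd_of_map_eq [Nontrivial S] (hsurj : Function.Surjective φ)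
    (hφ : RingHom.ker φ ^ 2 = ⊥) {h f f' g : R[X]} (hfac : h = f * g)
    (hcop : IsCoprime (f.map φ) (g.map φ)) (hf : f.Monic) (hf' : f'.Monic) (hdvd : f' ∣ h)
    (hmap : f'.map φ = f.map φ) : f' = f := by
  obtain ⟨g', hg'⟩ := hdvd
  have hg : (g' - g).map φ = 0 := by
    have := congrArg (map φ) (hg'.symm.trans hfac)
    rw [Polynomial.map_mul, Polynomial.map_mul, hmap, ← sub_eq_zero, ← mul_sub] at this
    rwa [Polynomial.map_sub, ← (hf.map φ).mul_right_eq_zero_iff]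
  have hδ : (f' - f).map φ = 0 := by rw [Polynomial.map_sub, hmap, sub_self]
  obtain ⟨A, B, hAB⟩ := exists_map_mul_add_mul_eq_one hsurj hcop
  have hBez := mul_eq_self_of_map_eq_one hφ hδ hAB
  have hδε := mul_eq_zero_of_map_eq_zero hφ hδ hg
  have hff' : f ∣ f' :=
    ⟨1 + (f' - f) * A - B * (g' - g), by linear_combination -hBez - B * hδε - B * hg' + B * hfac⟩
  exact eq_of_monic_of_dvd_of_natDegree_le hf hf' hff'
    (by rw [← hf'.natDegree_map φ, hmap, hf.natDegree_map])

theorem existsUnique_monic_dvd_map_eq [Nontrivial S] (hsurj : Function.Surjective φ)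
    (hφ : RingHom.ker φ ^ 2 = ⊥) {h : R[X]} (hsep : (h.map φ).Separable) {f₁ : S[X]}
    (hf₁ : f₁.Monic) (hdvd : f₁ ∣ h.map φ) :
    ∃! f : R[X], f.Monic ∧ f ∣ h ∧ f.map φ = f₁ := by
  obtain ⟨g₁, hg₁⟩ := hdvd
  obtain ⟨f, hf, ⟨g, rfl⟩, hfmap⟩ :=
    exists_monic_dvd_map_eq_of_isCoprime hsurj hφ hf₁ (hg₁ ▸ hsep).isCoprime hg₁
  refine ⟨f, ⟨hf, dvd_mul_right f g, hfmap⟩, fun f' ⟨hf', hdvd', hmap'⟩ => ?_⟩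
  exact eq_of_monic_of_dvd_of_map_eq hsurj hφ rfl ((Polynomial.map_mul φ) ▸ hsep).isCoprime
    hf hf' hdvd' (hmap'.trans hfmap.symm)

end Polynomial

theorem red2_surjective : Function.Surjective red2 := ZMod.castHom_surjective _

theorem ker_red2_sq_eq_bot : RingHom.ker red2 ^ 2 = ⊥ := by
  refine eq_bot_iff.2 (sq (RingHom.ker red2) ▸ Ideal.mul_le.2 fun a ha b hb => ?_)
  rw [RingHom.mem_ker] at ha hb
  rw [Ideal.mem_bot]
  revert a b
  decide

theorem hensel_lift_divisor_general (n : ℕ) (hn : Odd n)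
    (f₁ : Polynomial (ZMod 2)) (hmon : f₁.Monic)
    (hdvd : f₁ ∣ X ^ n - 1) :
    ∃! f : Polynomial (ZMod 4),
      f.Monic ∧ f ∣ X ^ n - 1 ∧ f.map red2 = f₁ := by
  have hmap : ((X : (ZMod 4)[X]) ^ n - 1).map red2 = X ^ n - C 1 := by
    rw [Polynomial.map_sub, Polynomial.map_pow, map_X, Polynomial.map_one, C_1]
  have hn₂ : (n : ZMod 2) ≠ 0 := by
    rwa [Ne, ZMod.natCast_eq_zero_iff, ← even_iff_two_dvd, Nat.not_even_iff_odd]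
  refine existsUnique_monic_dvd_map_eq red2_surjective ker_red2_sq_eq_bot ?_ hmon ?_
  · rw [hmap]
    exact separable_X_pow_sub_C 1 hn₂ one_ne_zero
  · rwa [hmap, C_1]

/-- Hensel lift: for odd `n`, every monic divisor `f₁` of `x^n - 1` over `ℤ/2` lifts to a
unique monic divisor `f` of `x^n - 1` over `ℤ/4` with mod-2 reduction `f₁`. -/
theorem hensel_lift_divisor (n : ℕ) (hpos : 0 < n) (hn : Odd n)
    (f₁ : Polynomial (ZMod 2)) (hmon : f₁.Monic)
    (hdvd : f₁ ∣ X ^ n - 1) :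
    ∃! f : Polynomial (ZMod 4),
      f.Monic ∧ f ∣ X ^ n - 1 ∧ f.map red2 = f₁ :=
  hensel_lift_divisor_general n hn f₁ hmon hdvd
end

section
/- Let C be a GQC code over Z4 with normalized triangular generators, let C⊥ have normalized generators e_i = (E_{i,1}|...|E_{i,i}|0|...|0), and for the truncated code (i)C let G_{r,r}^{(r−1)} be the diagonalized generator polynomial of the r-th block obtained by successive elimination (so that (0|...|0|G_{r,r}^{(r−1)}|0|...|0) ∈ (i)C). Then E_{t,r} · (G_{r,r}^{(r−1)})* ≡ 0 (mod x^{m_r} − 1) for all 1 ≤ r ≤ i and r ≤ t ≤ i. -/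
/-! The codeword `(0|…|0|G_r|0|…|0)` and all its cyclic shifts lie in `C`, and pairing `e_t`
with the `n`-th shift only sees block `r`, so every cyclic correlation `∑ⱼ E_j G_{j-n}` of the
coefficient vectors of `E = E_{t,r}` and `G = G_r` vanishes. In `R[x]/(x^M - 1)`, where
`x⁻¹ = x^{M-1}`, these correlations are the coefficients of `E(x) G(x⁻¹)`, and
`G* = x^{deg G} G(x⁻¹)`; hence `E G* = 0` there. -/

open Polynomial

/-- The simultaneous cyclic shift of each block. -/
def shiftAll {l : ℕ} (m : Fin l → ℕ) [∀ i, NeZero (m i)]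
    (c : ∀ i, Fin (m i) → ZMod 4) : ∀ i, Fin (m i) → ZMod 4 :=
  fun i j => c i (j - 1)

/-- The Euclidean inner product on `(ℤ/4)^{m₁} × ⋯ × (ℤ/4)^{m_l}`. -/
def innerP {l : ℕ} (m : Fin l → ℕ) (c d : ∀ i, Fin (m i) → ZMod 4) : ZMod 4 :=
  ∑ i, ∑ j, c i j * d i j

/-- The coefficient vector in `(ℤ/4)^{m_r}` of (the reduction mod `x^{m_r}-1` of) a
polynomial. -/
noncomputable def vecOf {l : ℕ} (m : Fin l → ℕ) (r : Fin l)
    (p : Polynomial (ZMod 4)) : Fin (m r) → ZMod 4 :=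
  fun j => (p %ₘ ((X : Polynomial (ZMod 4)) ^ (m r : ℕ) - 1)).coeff (j : ℕ)

section CyclicConvolution

variable {M : ℕ} [NeZero M]

lemma pow_val_sub_mul_pow_val {S : Type*} [Monoid S] {u : S} (hu : u ^ M = 1) (a b : Fin M) :
    u ^ ((a - b : Fin M) : ℕ) * u ^ (b : ℕ) = u ^ (a : ℕ) := by
  rw [← pow_add, pow_eq_pow_mod _ hu, ← Fin.val_add, sub_add_cancel]

lemma pow_val_mul_pow_val_sub {S : Type*} [CommMonoid S] {u v : S} (hu : u ^ M = 1)
    (huv : u * v = 1) (a b : Fin M) :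
    u ^ (a : ℕ) * v ^ ((a - b : Fin M) : ℕ) = u ^ (b : ℕ) := by
  rw [← pow_val_sub_mul_pow_val hu a b, mul_right_comm, ← mul_pow, huv, one_pow, one_mul]

lemma sum_mul_sum_inv_eq_sum_correlation {S : Type*} [CommRing S] {u v : S} (hu : u ^ M = 1)
    (huv : u * v = 1) (a b : Fin M → S) :
    (∑ j, a j * u ^ (j : ℕ)) * (∑ k, b k * v ^ (k : ℕ)) =
      ∑ n, (∑ j, a j * b (j - n)) * u ^ (n : ℕ) := by
  simp_rw [Finset.sum_mul_sum, Finset.sum_mul]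
  conv_rhs => rw [Finset.sum_comm]
  refine Finset.sum_congr rfl fun j _ =>
    (Fintype.sum_equiv (Equiv.subLeft j) _ _ fun n => ?_).symm
  rw [Equiv.subLeft_apply, ← pow_val_mul_pow_val_sub hu huv j n]
  ring

end CyclicConvolution

section CyclicReduction

variable {R : Type*} [CommRing R] {S : Type*} [CommRing S] [Algebra R S]

noncomputable def cyclicCoeff (M : ℕ) (p : R[X]) (j : Fin M) : R :=
  (p %ₘ (X ^ M - 1)).coeff j

lemma aeval_eq_sum_cyclicCoeff [Nontrivial R] {M : ℕ} [NeZero M] {s : S} (hs : s ^ M = 1)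
    (p : R[X]) : aeval s p = ∑ j : Fin M, algebraMap R S (cyclicCoeff M p j) * s ^ (j : ℕ) := by
  have hmonic : (X ^ M - 1 : R[X]).Monic := by
    simpa using monic_X_pow_sub_C (1 : R) (NeZero.ne M)
  have hnat : (X ^ M - 1 : R[X]).natDegree = M := by
    simpa using natDegree_X_pow_sub_C (n := M) (r := (1 : R))
  have hdeg : (p %ₘ (X ^ M - 1)).natDegree < M :=
    (natDegree_modByMonic_lt p hmonic fun h => NeZero.ne M (by rw [← hnat, h, natDegree_one])
      ).trans_eq hnat
  rw [← aeval_modByMonic_eq_self_of_root (q := X ^ M - 1) (by simp [hs]),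
    aeval_eq_sum_range' hdeg, ← Fin.sum_univ_eq_sum_range]
  simp only [Algebra.smul_def, cyclicCoeff]

lemma aeval_reverse {u v : S} (huv : u * v = 1) (q : R[X]) :
    aeval u q.reverse = u ^ q.natDegree * aeval v q := by
  let : Invertible v := ⟨u, huv, by rw [mul_comm, huv]⟩
  rw [aeval_def, aeval_def, ← eval₂_reverse_mul_pow _ v q, invOf_eq_left_inv huv,
    mul_left_comm, ← mul_pow, huv, one_pow, mul_one]

theorem X_pow_sub_one_dvd_mul_reverse_of_correlation {M : ℕ} [NeZero M] (p q : R[X])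
    (h : ∀ n : Fin M, ∑ j, cyclicCoeff M p j * cyclicCoeff M q (j - n) = 0) :
    X ^ M - 1 ∣ p * q.reverse := by
  nontriviality R
  rw [← AdjoinRoot.mk_eq_zero, ← AdjoinRoot.aeval_eq, map_mul]
  set u := AdjoinRoot.root (X ^ M - 1 : R[X])
  have hu : u ^ M = 1 := by
    have h := AdjoinRoot.mk_self (f := (X ^ M - 1 : R[X]))
    rwa [map_sub, map_pow, map_one, AdjoinRoot.mk_X, sub_eq_zero] at h
  have huv : u * u ^ (M - 1) = 1 := by
    rw [← pow_succ', Nat.sub_add_cancel NeZero.one_le, hu]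
  have hv : (u ^ (M - 1)) ^ M = 1 := by rw [← pow_mul, mul_comm, pow_mul, hu, one_pow]
  rw [aeval_reverse huv, aeval_eq_sum_cyclicCoeff hu, aeval_eq_sum_cyclicCoeff hv,
    mul_left_comm, sum_mul_sum_inv_eq_sum_correlation hu huv]
  simp only [← map_mul, ← map_sum, h, map_zero, zero_mul, Finset.sum_const_zero, mul_zero]

end CyclicReduction

open Fin.NatCast in
lemma shiftAll_iterate_apply {l : ℕ} (m : Fin l → ℕ) [∀ i, NeZero (m i)] (k : ℕ)
    (c : ∀ i, Fin (m i) → ZMod 4) (s : Fin l) (j : Fin (m s)) :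
    (shiftAll m)^[k] c s j = c s (j - k) := by
  induction k generalizing j with
  | zero => simp
  | succ k ih => rw [Function.iterate_succ_apply', shiftAll, ih, Nat.cast_succ, sub_sub, add_comm]

lemma innerP_eq_sum_of_block {l : ℕ} {m : Fin l → ℕ} {e c : ∀ i, Fin (m i) → ZMod 4}
    (r : Fin l) (h : ∀ s ≠ r, e s = 0 ∨ c s = 0) : innerP m e c = ∑ j, e r j * c r j :=
  Finset.sum_eq_single r (fun s _ hs => by rcases h s hs with h | h <;> simp [h]) (by simp)

theorem dual_entries_orthogonal_to_diagonalized_general (l : ℕ) (m : Fin l → ℕ)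
    [∀ i, NeZero (m i)]
    (Ccode : Submodule (ZMod 4) (∀ r, Fin (m r) → ZMod 4))
    (hC : ∀ c ∈ Ccode, shiftAll m c ∈ Ccode)
    (i : Fin l)
    (E : Fin l → Fin l → Polynomial (ZMod 4))
    (eVec : Fin l → ∀ r, Fin (m r) → ZMod 4)
    (heVec : ∀ t r, eVec t r = if r ≤ t then vecOf m r (E t r) else 0)
    (hdual : ∀ t : Fin l, ∀ c ∈ Ccode, innerP m (eVec t) c = 0)
    (G : Fin l → Polynomial (ZMod 4))
    (hG : ∀ r : Fin l, r ≤ i → ∃ c ∈ Ccode, c r = vecOf m r (G r) ∧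
        ∀ s : Fin l, s ≤ i → s ≠ r → c s = 0)
    (t r : Fin l) (hrt : r ≤ t) (hti : t ≤ i) :
    ((X : Polynomial (ZMod 4)) ^ (m r : ℕ) - 1) ∣ E t r * (G r).reverse := by
  obtain ⟨c, hcC, hcr, hc0⟩ := hG r (hrt.trans hti)
  refine X_pow_sub_one_dvd_mul_reverse_of_correlation _ _ fun n => ?_
  rw [← hdual t _ (Set.MapsTo.iterate hC n hcC), innerP_eq_sum_of_block r]
  · simp only [heVec, if_pos hrt, shiftAll_iterate_apply, hcr, Fin.cast_val_eq_self]
    rfl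
  · intro s hs
    by_cases hsi : s ≤ i
    · exact .inr (funext fun j => by rw [shiftAll_iterate_apply, hc0 s hsi hs]; rfl)
    · exact .inl (by rw [heVec, if_neg fun hst => hsi (hst.trans hti)])

/-- Lemma 5: if `C` is a GQC code over `ℤ/4`, `e_t = (E_{t,1}|…|E_{t,t}|0|…|0)` are the
normalized generators of `C^⊥`, and `G_{r,r}^{(r-1)}` (here `G r`) is the diagonalized
generator of the `r`-th block obtained by successive elimination, so that the vector
`(0|…|0|G_{r,r}^{(r-1)}|0|…|0)` lies in the truncated code `(i)C`, then
`E_{t,r} · (G_{r,r}^{(r-1)})* ≡ 0 (mod x^{m_r} - 1)` for all `r ≤ t ≤ i`. -/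
theorem dual_entries_orthogonal_to_diagonalized (l : ℕ) (m : Fin l → ℕ)
    [∀ i, NeZero (m i)] (hodd : ∀ i, Odd (m i))
    (Ccode : Submodule (ZMod 4) (∀ r, Fin (m r) → ZMod 4))
    (hC : ∀ c ∈ Ccode, shiftAll m c ∈ Ccode)
    (i : Fin l)
    (E : Fin l → Fin l → Polynomial (ZMod 4))
    (eVec : Fin l → ∀ r, Fin (m r) → ZMod 4)
    (heVec : ∀ t r, eVec t r = if r ≤ t then vecOf m r (E t r) else 0)
    (hdual : ∀ t : Fin l, ∀ c ∈ Ccode, innerP m (eVec t) c = 0)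
    (G : Fin l → Polynomial (ZMod 4)) (hGmon : ∀ r, (G r).Monic)
    (hG : ∀ r : Fin l, r ≤ i → ∃ c ∈ Ccode, c r = vecOf m r (G r) ∧
        ∀ s : Fin l, s ≤ i → s ≠ r → c s = 0)
    (t r : Fin l) (hrt : r ≤ t) (hti : t ≤ i) :
    ((X : Polynomial (ZMod 4)) ^ (m r : ℕ) - 1) ∣ E t r * (G r).reverse :=
  dual_entries_orthogonal_to_diagonalized_general l m Ccode hC i E eVec heVec hdual G hG t r hrt hti
end
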